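/- arXiv:2310.08824 — 3 statements merged into one kernel-verified Lean document; each statement's English description precedes it below -/
import Mathlib

section
/- Let r_1 ≤ r_2 ≤ ... ≤ r_n be real numbers and let a_i, b_i be reals with 0 < a_i ≤ b_i for each i. If a weight vector W with a_i ≤ W_i ≤ b_i maximizes the objective (∑_i r_i W_i)/(∑_i W_i) over the box ∏_i [a_i, b_i], then there exists a threshold index k ∈ {1,...,n+1} such that some maximizer W* satisfies W*_i = a_i for all i < k and W*_i = b_i for all i ≥ k. -/
/-- Linear fractional program over a box:
maximize f(W) = (∑ r_i W_i)/(∑ W_i) over a_i ≤ W_i ≤ b_i with 0 < a_i ≤ b_i and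
r nondecreasing.  If W is a maximizer, then there is a threshold k ∈ {1,…,n+1}
and a maximizer W* with W*_i = a_i for i < k and W*_i = b_i for i ≥ k
(indices i ∈ {1,…,n} encoded via (i : Fin n) ↦ i.val + 1). -/
theorem stmt0 (n : ℕ) (r a b : Fin n → ℝ) (hr : Monotone r)
    (ha : ∀ i, 0 < a i) (hab : ∀ i, a i ≤ b i)
    (W : Fin n → ℝ) (hW : ∀ i, W i ∈ Set.Icc (a i) (b i))
    (hmax : ∀ V : Fin n → ℝ, (∀ i, V i ∈ Set.Icc (a i) (b i)) →
      (∑ i, r i * V i) / (∑ i, V i) ≤ (∑ i, r i * W i) / (∑ i, W i)) :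
    ∃ (k : ℕ) (Wstar : Fin n → ℝ), 1 ≤ k ∧ k ≤ n + 1 ∧
      (∀ i, Wstar i ∈ Set.Icc (a i) (b i)) ∧
      (∀ V : Fin n → ℝ, (∀ i, V i ∈ Set.Icc (a i) (b i)) →
        (∑ i, r i * V i) / (∑ i, V i) ≤ (∑ i, r i * Wstar i) / (∑ i, Wstar i)) ∧
      (∀ i : Fin n, (i : ℕ) + 1 < k → Wstar i = a i) ∧
      (∀ i : Fin n, k ≤ (i : ℕ) + 1 → Wstar i = b i) := by
  rcases Nat.eq_zero_or_pos n with hn | hn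
  · subst hn
    exact ⟨1, W, le_refl 1, by omega, hW, hmax, fun i => i.elim0, fun i => i.elim0⟩
  have : NeZero n := ⟨by omega⟩
  set c : ℝ := (∑ i, r i * W i) / (∑ i, W i) with hc
  have hpos : ∀ V : Fin n → ℝ, (∀ i, V i ∈ Set.Icc (a i) (b i)) → 0 < ∑ i, V i := by
    intro V hV
    apply Finset.sum_pos
    · intro i _; exact lt_of_lt_of_le (ha i) (hV i).1
    · exact Finset.univ_nonempty
  have hDW : 0 < ∑ i, W i := hpos W hW
  have key : ∀ V : Fin n → ℝ, (∀ i, V i ∈ Set.Icc (a i) (b i)) →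
      ∑ i, r i * V i ≤ c * ∑ i, V i := by
    intro V hV
    have h := hmax V hV
    have hDV := hpos V hV
    rw [div_le_div_iff₀ hDV hDW] at h
    rw [hc, div_mul_eq_mul_div, le_div_iff₀ hDW]
    nlinarith [h]
  set Wstar : Fin n → ℝ := fun i => if c ≤ r i then b i else a i with hWs
  have hWsIcc : ∀ i, Wstar i ∈ Set.Icc (a i) (b i) := by
    intro i
    by_cases h : c ≤ r i <;> simp [hWs, h, hab i, le_refl]
  have hge : ∀ i, (r i - c) * W i ≤ (r i - c) * Wstar i := by
    intro i
    by_cases h : c ≤ r i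
    · have h2 : W i ≤ Wstar i := by simpa [hWs, h] using (hW i).2
      exact mul_le_mul_of_nonneg_left h2 (by linarith)
    · push_neg at h
      have h2 : Wstar i ≤ W i := by simpa [hWs, not_le.2 h] using (hW i).1
      exact mul_le_mul_of_nonpos_left h2 (by linarith)
  have hexp : ∀ V : Fin n → ℝ,
      ∑ i, (r i - c) * V i = (∑ i, r i * V i) - c * ∑ i, V i := by
    intro V
    rw [Finset.mul_sum, ← Finset.sum_sub_distrib]
    congr 1; ext i; ring
  have gW : ∑ i, (r i - c) * W i = 0 := by
    rw [hexp]
    have : c * ∑ i, W i = ∑ i, r i * W i := by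
      rw [hc]; field_simp
    linarith
  have gWs_le : ∑ i, (r i - c) * Wstar i ≤ 0 := by
    rw [hexp]
    linarith [key Wstar hWsIcc]
  have gWs_ge : (0:ℝ) ≤ ∑ i, (r i - c) * Wstar i := by
    rw [← gW]
    exact Finset.sum_le_sum (fun i _ => hge i)
  have gWs : ∑ i, (r i - c) * Wstar i = 0 := le_antisymm gWs_le gWs_ge
  have hDWs : 0 < ∑ i, Wstar i := hpos Wstar hWsIcc
  have hfWs : (∑ i, r i * Wstar i) / (∑ i, Wstar i) = c := by
    rw [hexp] at gWs
    rw [div_eq_iff (ne_of_gt hDWs)]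
    linarith
  have hWsmax : ∀ V : Fin n → ℝ, (∀ i, V i ∈ Set.Icc (a i) (b i)) →
      (∑ i, r i * V i) / (∑ i, V i) ≤ (∑ i, r i * Wstar i) / (∑ i, Wstar i) := by
    intro V hV
    rw [hfWs]
    exact hmax V hV
  -- threshold
  set F : Finset (Fin n) := Finset.univ.filter (fun i => c ≤ r i) with hF
  by_cases hne : F.Nonempty
  · set i0 := F.min' hne with hi0
    have hi0mem : i0 ∈ F := F.min'_mem hne
    have hi0r : c ≤ r i0 := by
      have := hi0mem; rw [hF, Finset.mem_filter] at this; exact this.2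
    refine ⟨(i0 : ℕ) + 1, Wstar, by omega, by omega, hWsIcc, hWsmax, ?_, ?_⟩
    · intro i hi
      have hii : i < i0 := by
        rw [Fin.lt_iff_val_lt_val]; omega
      have hnot : i ∉ F := fun hmem => absurd (F.min'_le i hmem) (not_le.2 hii)
      rw [hF, Finset.mem_filter] at hnot
      push_neg at hnot
      have : ¬ c ≤ r i := not_le.2 (hnot (Finset.mem_univ i))
      simp [hWs, this]
    · intro i hi
      have hii : i0 ≤ i := by
        rw [Fin.le_iff_val_le_val]; omega
      have : c ≤ r i := le_trans hi0r (hr hii)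
      simp [hWs, this]
  · refine ⟨n + 1, Wstar, by omega, le_refl _, hWsIcc, hWsmax, ?_, ?_⟩
    · intro i _
      have : i ∉ F := fun h => hne ⟨i, h⟩
      rw [hF, Finset.mem_filter] at this
      push_neg at this
      have h2 : ¬ c ≤ r i := not_le.2 (this (Finset.mem_univ i))
      simp [hWs, h2]
    · intro i hi
      exfalso
      have := i.isLt
      omega
end

section
/- Let r_1 ≤ ... ≤ r_n be reals and 0 < a_i ≤ b_i. For k ∈ {1,...,n+1} define λ(k) = (∑_{i<k} a_i r_i + ∑_{i≥k} b_i r_i)/(∑_{i<k} a_i + ∑_{i≥k} b_i). Then the maximum of (∑_i r_i W_i)/(∑_i W_i) over the box ∏_i [a_i,b_i] equals max_{k ∈ {1,...,n+1}} λ(k). -/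
lemma stmt1_aux (n : ℕ) (r a b : Fin n → ℝ) (hr : Monotone r)
    (ha : ∀ i, 0 < a i) (hab : ∀ i, a i ≤ b i) (M : ℝ)
    (hub : ∀ k ∈ Finset.Icc 1 (n + 1),
      (∑ i : Fin n, (if (i : ℕ) + 1 < k then a i * r i else b i * r i)) /
      (∑ i : Fin n, (if (i : ℕ) + 1 < k then a i else b i)) ≤ M)
    (W : Fin n → ℝ) (hW : ∀ i, W i ∈ Set.Icc (a i) (b i)) :
    (∑ i, r i * W i) / (∑ i, W i) ≤ M := by
  rcases Nat.eq_zero_or_pos n with hn | hn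
  · subst hn
    have := hub 1 (by simp)
    simpa using this
  · set c := (Finset.univ.filter fun j : Fin n => r j < M).card with hc
    have hcn : c ≤ n := le_trans (Finset.card_filter_le _ _) (by simp)
    have hiff : ∀ i : Fin n, (i : ℕ) < c ↔ r i < M := by
      intro i
      constructor
      · intro h
        by_contra hri
        push_neg at hri
        have hsub : (Finset.univ.filter fun j : Fin n => r j < M) ⊆
            Finset.Iio i := by
          intro j hj
          simp only [Finset.mem_filter, Finset.mem_univ, true_and] at hj
          rw [Finset.mem_Iio]
          by_contra hij
          push_neg at hij
          exact absurd (lt_of_lt_of_le hj (le_trans hri (hr hij))) (lt_irrefl _)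
        have := Finset.card_le_card hsub
        rw [← hc] at this
        simp at this
        omega
      · intro h
        have hsub : Finset.Iic i ⊆ (Finset.univ.filter fun j : Fin n => r j < M) := by
          intro j hj
          rw [Finset.mem_Iic] at hj
          simp only [Finset.mem_filter, Finset.mem_univ, true_and]
          exact lt_of_le_of_lt (hr hj) h
        have := Finset.card_le_card hsub
        rw [← hc] at this
        simp at this
        omega
    have hkmem : c + 1 ∈ Finset.Icc 1 (n + 1) := by
      rw [Finset.mem_Icc]; omega
    have hMk := hub (c + 1) hkmem
    have hD : 0 < ∑ i : Fin n, (if (i : ℕ) + 1 < c + 1 then a i else b i) := by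
      apply Finset.sum_pos
      · intro i _
        split
        · exact ha i
        · exact lt_of_lt_of_le (ha i) (hab i)
      · exact Finset.univ_nonempty_iff.mpr ⟨⟨0, hn⟩⟩
    have hND : (∑ i : Fin n, (if (i : ℕ) + 1 < c + 1 then a i * r i else b i * r i)) ≤
        M * (∑ i : Fin n, (if (i : ℕ) + 1 < c + 1 then a i else b i)) := by
      rw [div_le_iff₀ hD] at hMk
      linarith
    have key : ∑ i : Fin n, (r i - M) * W i ≤
        ∑ i : Fin n, (r i - M) * (if (i : ℕ) + 1 < c + 1 then a i else b i) := by
      apply Finset.sum_le_sum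
      intro i _
      by_cases h : (i : ℕ) + 1 < c + 1
      · rw [if_pos h]
        have hri : r i < M := (hiff i).mp (by omega)
        have := (hW i).1
        nlinarith
      · rw [if_neg h]
        have hri : M ≤ r i := by
          by_contra hx
          push_neg at hx
          have h2 := (hiff i).mpr hx
          omega
        have := (hW i).2
        nlinarith
    have hRHS : ∑ i : Fin n, (r i - M) * (if (i : ℕ) + 1 < c + 1 then a i else b i) =
        (∑ i : Fin n, (if (i : ℕ) + 1 < c + 1 then a i * r i else b i * r i)) -
        M * (∑ i : Fin n, (if (i : ℕ) + 1 < c + 1 then a i else b i)) := by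
      rw [Finset.mul_sum, ← Finset.sum_sub_distrib]
      apply Finset.sum_congr rfl
      intro i _
      split <;> ring
    have hLHS : ∑ i : Fin n, (r i - M) * W i =
        (∑ i, r i * W i) - M * (∑ i, W i) := by
      rw [Finset.mul_sum, ← Finset.sum_sub_distrib]
      apply Finset.sum_congr rfl
      intro i _
      ring
    have hWpos : 0 < ∑ i, W i := by
      apply Finset.sum_pos
      · intro i _
        exact lt_of_lt_of_le (ha i) (hW i).1
      · exact Finset.univ_nonempty_iff.mpr ⟨⟨0, hn⟩⟩
    rw [div_le_iff₀ hWpos]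
    rw [hLHS, hRHS] at key
    linarith

/-- The maximum of the linear fractional objective
(∑ r_i W_i)/(∑ W_i) over the box ∏ [a_i, b_i] (0 < a_i ≤ b_i, r nondecreasing)
equals max_{k ∈ {1,…,n+1}} λ(k), where λ(k) is the objective value of the
threshold vector taking value a_i for i < k and b_i for i ≥ k. -/
theorem stmt1 (n : ℕ) (r a b : Fin n → ℝ) (hr : Monotone r)
    (ha : ∀ i, 0 < a i) (hab : ∀ i, a i ≤ b i) :
    IsGreatest
      ((fun W : Fin n → ℝ => (∑ i, r i * W i) / (∑ i, W i)) ''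
        {W | ∀ i, W i ∈ Set.Icc (a i) (b i)})
      ((Finset.Icc 1 (n + 1)).sup' (Finset.nonempty_Icc.mpr (by omega))
        (fun k =>
          (∑ i : Fin n, (if (i : ℕ) + 1 < k then a i * r i else b i * r i)) /
          (∑ i : Fin n, (if (i : ℕ) + 1 < k then a i else b i)))) := by
  constructor
  · obtain ⟨k₀, hk₀, hEq⟩ := Finset.exists_mem_eq_sup'
      (Finset.nonempty_Icc.mpr (by omega : (1:ℕ) ≤ n + 1))
      (fun k =>
          (∑ i : Fin n, (if (i : ℕ) + 1 < k then a i * r i else b i * r i)) /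
          (∑ i : Fin n, (if (i : ℕ) + 1 < k then a i else b i)))
    refine ⟨fun i => if (i : ℕ) + 1 < k₀ then a i else b i, fun i => ?_,
      Eq.trans ?_ hEq.symm⟩
    · dsimp only
      split
      · exact ⟨le_refl _, hab i⟩
      · exact ⟨hab i, le_refl _⟩
    · dsimp only
      congr 1
      apply Finset.sum_congr rfl
      intro i _
      split <;> ring
  · rintro x ⟨W, hW, rfl⟩
    exact stmt1_aux n r a b hr ha hab _ (fun k hk => Finset.le_sup'
      (fun k : ℕ =>
          (∑ i : Fin n, (if (i : ℕ) + 1 < k then a i * r i else b i * r i)) /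
          (∑ i : Fin n, (if (i : ℕ) + 1 < k then a i else b i))) hk) W hW
end

section
/- Let r_1 ≤ ... ≤ r_n and 0 < a_i ≤ b_i. If W* is a maximizer of (∑_i r_i W_i)/(∑_i W_i) over the box, then it cannot happen that W*_i = b_i and W*_j = a_j for indices i < j (with r_i ≤ r_j) unless the objective is constant in those coordinates: formally, if ∂f/∂W_i(W*) > 0 at W* then ∂f/∂W_j(W*) > 0 as well, for any i < j. -/
/-! At `W` the partial derivative of the weighted mean in coordinate `i` is
`(r i * ∑ W - ∑ r W) / (∑ W) ^ 2`. It depends on `i` only through `r i`, and is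
increasing in it because `∑ W > 0`; so it is monotone along the ordering of `r`. -/

open Function

theorem sum_mul_update_eq_add {ι 𝕜 : Type*} [Fintype ι] [DecidableEq ι] [CommRing 𝕜]
    (c W : ι → 𝕜) (i : ι) (t : 𝕜) :
    ∑ k, c k * update W i t k = ∑ k, c k * W k + c i * (t - W i) := by
  have hterm : ∀ k, c k * update W i t k =
      c k * W k + if k = i then c i * (t - W i) else 0 := by
    intro k
    rcases eq_or_ne k i with rfl | hk
    · simp only [update_self, if_true]; ring
    · simp [hk]
  simp only [hterm, Finset.sum_add_distrib, Finset.sum_ite_eq', Finset.mem_univ, if_true]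

theorem sum_update_eq_add {ι 𝕜 : Type*} [Fintype ι] [DecidableEq ι] [CommRing 𝕜]
    (W : ι → 𝕜) (i : ι) (t : 𝕜) :
    ∑ k, update W i t k = ∑ k, W k + (t - W i) := by
  simpa using sum_mul_update_eq_add 1 W i t

theorem hasDerivAt_weightedMean_update {ι 𝕜 : Type*} [Fintype ι] [DecidableEq ι]
    [NontriviallyNormedField 𝕜] (r W : ι → 𝕜) (i : ι) (hW : ∑ k, W k ≠ 0) :
    HasDerivAt (fun t => (∑ k, r k * update W i t k) / ∑ k, update W i t k)
      ((r i * ∑ k, W k - ∑ k, r k * W k) / (∑ k, W k) ^ 2) (W i) := by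
  simp only [sum_mul_update_eq_add, sum_update_eq_add]
  have hnum : HasDerivAt (fun t => ∑ k, r k * W k + r i * (t - W i)) (r i) (W i) := by
    simpa using
      (((hasDerivAt_id (W i)).sub_const (W i)).const_mul (r i)).const_add (∑ k, r k * W k)
  have hden : HasDerivAt (fun t => ∑ k, W k + (t - W i)) 1 (W i) := by
    simpa using ((hasDerivAt_id (W i)).sub_const (W i)).const_add (∑ k, W k)
  simpa [mul_comm] using hnum.fun_div hden (by simpa using hW)

theorem stmt4_general (n : ℕ) (r a b W : Fin n → ℝ) (hr : Monotone r)
    (ha : ∀ k, 0 < a k)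
    (hW : ∀ k, W k ∈ Set.Icc (a k) (b k))
    (i j : Fin n) (hij : i < j) (di dj : ℝ)
    (hdi : HasDerivAt
      (fun t => (∑ k, r k * Function.update W i t k) / (∑ k, Function.update W i t k))
      di (W i))
    (hdj : HasDerivAt
      (fun t => (∑ k, r k * Function.update W j t k) / (∑ k, Function.update W j t k))
      dj (W j))
    (hpos : 0 < di) : 0 < dj := by
  have hS : 0 < ∑ k, W k :=
    Finset.sum_pos (fun k _ => (ha k).trans_le (hW k).1) ⟨i, Finset.mem_univ i⟩
  have hdi_eq := hdi.unique (hasDerivAt_weightedMean_update r W i hS.ne')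
  have hdj_eq := hdj.unique (hasDerivAt_weightedMean_update r W j hS.ne')
  have hnum : r i * ∑ k, W k ≤ r j * ∑ k, W k :=
    mul_le_mul_of_nonneg_right (hr hij.le) hS.le
  calc 0 < di := hpos
    _ ≤ dj := by
      rw [hdi_eq, hdj_eq]
      gcongr

/-- For f(W) = (∑ r_k W_k)/(∑ W_k) with r nondecreasing and W in the
box ∏ [a_k, b_k] (0 < a_k ≤ b_k), for indices i < j: if the partial derivative of
f in coordinate i at W is positive, then so is the partial derivative in
coordinate j.  (Hence a maximizer cannot have W_i = b_i and W_j = a_j for i < j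
unless the objective is flat in those coordinates.) -/
theorem stmt4 (n : ℕ) (r a b W : Fin n → ℝ) (hr : Monotone r)
    (ha : ∀ k, 0 < a k) (hab : ∀ k, a k ≤ b k)
    (hW : ∀ k, W k ∈ Set.Icc (a k) (b k))
    (i j : Fin n) (hij : i < j) (di dj : ℝ)
    (hdi : HasDerivAt
      (fun t => (∑ k, r k * Function.update W i t k) / (∑ k, Function.update W i t k))
      di (W i))
    (hdj : HasDerivAt
      (fun t => (∑ k, r k * Function.update W j t k) / (∑ k, Function.update W j t k))
      dj (W j))
    (hpos : 0 < di) : 0 < dj :=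
  stmt4_general n r a b W hr ha hW i j hij di dj hdi hdj hpos
end
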